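/- Let λ ∈ Λ with |λ| ≥ 2n and set t = 2n − λ₁. If λ₂ + t ≠ 2n−2, then the t-fold application of the Pieri operator (quantum multiplication by τ_{(1,1)}) to τ_λ equals q·τ_{(λ₂+t,0)}; if λ₂ + t = 2n−2, then it equals q·τ_{(2n−1,−1)} + q·τ_{(2n−2,0)}. -/
import Mathlib

open Polynomial

def Lam (n : ℤ) : Set (ℤ × ℤ) :=
  {p | p.1 ≤ 2*n - 1 ∧ p.2 ≤ p.1 ∧ -1 ≤ p.2 ∧
       (n - 2 < p.1 → p.2 < p.1) ∧ (p.2 = -1 → p.1 = 2*n - 1)}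

abbrev M := (ℤ × ℤ) →₀ Polynomial ℤ

noncomputable def tau (l : ℤ × ℤ) : M := Finsupp.single l 1

/-- Pech's quantum Pieri rule for multiplication by τ_(1,1), on basis indices. -/
noncomputable def pieriFun (n : ℤ) : ℤ × ℤ → M := fun p =>
  if p.1 = 2*n - 1 then
    (if p.2 = 2*n - 3 then (X : Polynomial ℤ) • (tau (2*n-1, -1) + tau (2*n-2, 0))
     else (X : Polynomial ℤ) • tau (p.2 + 1, 0))
  else if p.1 + p.2 = 2*n - 4 ∨ p.1 + p.2 = 2*n - 3 then
    tau (p.1 + 2, p.2) + tau (p.1 + 1, p.2 + 1)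
  else tau (p.1 + 1, p.2 + 1)

/-- The Pieri operator: quantum multiplication by τ_(1,1). -/
noncomputable def P (n : ℤ) : M →ₗ[Polynomial ℤ] M :=
  Finsupp.linearCombination (Polynomial ℤ) (pieriFun n)

lemma Papp (n : ℤ) (p : ℤ × ℤ) : P n (tau p) = pieriFun n p := by
  simp [P, tau, Finsupp.linearCombination_single]

lemma iterP (n a b : ℤ) (hsum : 2*n ≤ a + b) :
    ∀ k : ℕ, a + (k : ℤ) ≤ 2*n - 1 → (P n ^ k) (tau (a, b)) = tau (a + k, b + k) := by
  intro k
  induction k with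
  | zero => intro _; simp
  | succ k ih =>
    intro hk
    push_cast at hk
    have hk' : a + (k : ℤ) ≤ 2*n - 2 := by omega
    have e1 : (P n ^ (k+1)) (tau (a, b)) = P n ((P n ^ k) (tau (a, b))) := by
      rw [pow_succ']; rfl
    rw [e1, ih (by omega), Papp]
    have h1 : a + (k : ℤ) ≠ 2*n - 1 := by omega
    have h2 : ¬((a + (k:ℤ)) + (b + k) = 2*n - 4 ∨ (a + (k:ℤ)) + (b + k) = 2*n - 3) := by omega
    simp only [pieriFun, h1, if_false, if_neg h2]
    have : ((a + (k:ℤ)) + 1, (b + (k:ℤ)) + 1) = (a + ((k:ℕ)+1 : ℤ), b + ((k:ℕ)+1 : ℤ)) := by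
      simp only [Prod.mk.injEq]; push_cast; omega
    rw [this]
    push_cast
    rfl

theorem stmt5 (n : ℤ) (hn : 3 ≤ n) (l : ℤ × ℤ) (hl : l ∈ Lam n)
    (hdeg : 2*n ≤ l.1 + l.2) (t : ℕ) (ht : (t : ℤ) = 2*n - l.1) :
    (l.2 + (t : ℤ) ≠ 2*n - 2 →
      (P n ^ t) (tau l) = (X : Polynomial ℤ) • tau (l.2 + (t : ℤ), 0)) ∧
    (l.2 + (t : ℤ) = 2*n - 2 →
      (P n ^ t) (tau l) =
        (X : Polynomial ℤ) • tau (2*n - 1, -1) + (X : Polynomial ℤ) • tau (2*n - 2, 0)) := by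
  obtain ⟨a, b⟩ := l
  obtain ⟨h1, h2, h3, h4, h5⟩ := hl
  simp only at *
  have ht1 : 1 ≤ t := by omega
  obtain ⟨s, rfl⟩ : ∃ s, t = s + 1 := ⟨t - 1, by omega⟩
  push_cast at ht ⊢
  have hs : a + (s : ℤ) = 2*n - 1 := by omega
  have key : (P n ^ (s+1)) (tau (a, b)) = P n (tau (a + s, b + s)) := by
    rw [pow_succ']
    show P n ((P n ^ s) (tau (a,b))) = _
    rw [iterP n a b hdeg s (by omega)]
  rw [key, Papp]
  constructor
  · intro hne
    have hb : b + (s : ℤ) ≠ 2*n - 3 := by omega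
    simp only [pieriFun, hs, if_pos rfl, if_neg hb, if_true]
    rw [add_assoc]
  · intro heq
    have hb : b + (s : ℤ) = 2*n - 3 := by omega
    simp only [pieriFun, hs, if_pos rfl, hb, if_pos rfl, smul_add]
    simp
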